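/- arXiv:2103.05730 — 2 statements merged into one kernel-verified Lean document; each statement's English description precedes it below -/
import Mathlib

section
/- For symmetric positive-definite n×n matrices g₀, g₁, define a = (det g₀)^{1/4}, b = (det g₁)^{1/4}, κ = √(n·Tr(k₀²))/4 with k₀ the traceless part of log(g₀⁻¹g₁), and θ = min(π, κ). Then the pointwise squared Ebin distance d(g₀,g₁)² = (16/n)(a² − 2ab·cos θ + b²) is nonnegative, and it is zero if and only if g₀ = g₁. -/
open Matrix

/-- `k` is a real logarithm of `m` that is similar to a real symmetric matrix. -/
def IsRealLog {n : ℕ} (k m : Matrix (Fin n) (Fin n) ℝ) : Prop :=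
  NormedSpace.exp k = m ∧
    ∃ P S : Matrix (Fin n) (Fin n) ℝ, IsUnit P.det ∧ S.IsSymm ∧ k = P⁻¹ * S * P

/-!
Since `a² − 2ab cos θ + b² = (a − b cos θ)² + (b sin θ)²`, the quantity is nonnegative, and for
`a, b > 0`, `θ ∈ [0, π]` it vanishes exactly when `a = b` and `θ = 0`. As `k₀` is similar to a
symmetric matrix `S₀`, `tr (k₀²) = tr (S₀ᵀ S₀)` is a sum of squares, so `θ = 0` iff `k₀ = 0`, i.e.
`k = c • 1`. Then `g₁ = eᶜ g₀`, and `a = b` forces `e^{nc} = 1`, so `g₀ = g₁`. Conversely `g₀ = g₁`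
gives `exp k = 1`, and a matrix similar to a symmetric one with exponential `1` is zero, as one
sees by diagonalizing.
-/

open Real Set

theorem sq_sub_two_mul_mul_cos_add_sq_eq (a b θ : ℝ) :
    a ^ 2 - 2 * a * b * cos θ + b ^ 2 = (a - b * cos θ) ^ 2 + (b * sin θ) ^ 2 := by
  linear_combination (-b ^ 2) * sin_sq_add_cos_sq θ

theorem sq_sub_two_mul_mul_cos_add_sq_nonneg (a b θ : ℝ) :
    0 ≤ a ^ 2 - 2 * a * b * cos θ + b ^ 2 := by
  rw [sq_sub_two_mul_mul_cos_add_sq_eq]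
  positivity

theorem sq_sub_two_mul_mul_cos_add_sq_eq_zero_iff {a b θ : ℝ} (ha : 0 < a) (hb : 0 < b)
    (hθ : θ ∈ Icc 0 π) : a ^ 2 - 2 * a * b * cos θ + b ^ 2 = 0 ↔ a = b ∧ θ = 0 := by
  have hcos : cos θ = 1 ↔ θ = 0 := by
    rw [← cos_zero]
    exact injOn_cos.eq_iff hθ ⟨le_rfl, pi_pos.le⟩
  rw [← hcos]
  constructor
  · intro h
    have hsum : (a - b) ^ 2 + 2 * a * b * (1 - cos θ) = 0 := by linear_combination h
    obtain ⟨hab, hcos⟩ := (add_eq_zero_iff_of_nonneg (sq_nonneg _)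
      (mul_nonneg (by positivity) (sub_nonneg.2 (cos_le_one θ)))).mp hsum
    exact ⟨sub_eq_zero.mp (pow_eq_zero_iff two_ne_zero |>.mp hab),
      (sub_eq_zero.mp ((mul_eq_zero.mp hcos).resolve_left (by positivity))).symm⟩
  · rintro ⟨rfl, h⟩
    rw [h]
    ring

theorem min_eq_zero_iff_of_pos {α : Type*} [LinearOrder α] [Zero α] {x y : α} (hx : 0 < x) :
    min x y = 0 ↔ y = 0 := by
  rw [min_eq_iff]
  constructor
  · rintro (⟨rfl, -⟩ | ⟨h, -⟩)
    exacts [absurd hx (lt_irrefl 0), h]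
  · rintro rfl
    exact Or.inr ⟨rfl, hx.le⟩

namespace Matrix

variable {ι : Type*} [Fintype ι] [DecidableEq ι]

theorem exp_smul_one (c : ℝ) : NormedSpace.exp (c • (1 : Matrix ι ι ℝ)) = Real.exp c • 1 := by
  have : NormedSpace.exp (fun _ : ι => c) = fun _ => Real.exp c := by
    funext i; rw [Pi.coe_exp, Real.exp_eq_exp_ℝ]
  rw [smul_one_eq_diagonal, exp_diagonal, this, smul_one_eq_diagonal]

theorem eq_one_of_det_smul_eq [Nonempty ι] {r : ℝ} (hr : 0 ≤ r) {g : Matrix ι ι ℝ}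
    (hg : g.det ≠ 0) (h : (r • g).det = g.det) : r = 1 := by
  rw [det_smul, mul_left_eq_self₀, or_iff_left hg] at h
  exact (pow_eq_one_iff_of_nonneg hr Fintype.card_ne_zero).mp h

section Conj

variable {α : Type*} [CommRing α] {P : Matrix ι ι α}

theorem conj_mul_conj (hP : IsUnit P.det) (A B : Matrix ι ι α) :
    P⁻¹ * A * P * (P⁻¹ * B * P) = P⁻¹ * (A * B) * P := by
  simp only [Matrix.mul_assoc, mul_nonsing_inv_cancel_left _ _ hP]

theorem conj_inv_conj (hP : IsUnit P.det) (A : Matrix ι ι α) :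
    P * (P⁻¹ * A * P) * P⁻¹ = A := by
  rw [Matrix.mul_assoc P⁻¹, mul_nonsing_inv_cancel_left _ _ hP, mul_nonsing_inv_cancel_right _ _ hP]

end Conj

omit [DecidableEq ι] in
theorem IsSymm.trace_mul_self_nonneg {S : Matrix ι ι ℝ} (hS : S.IsSymm) : 0 ≤ (S * S).trace := by
  simpa only [(isHermitian_iff_isSymm.mpr hS).eq] using
    (posSemidef_conjTranspose_mul_self S).trace_nonneg

omit [DecidableEq ι] in
theorem IsSymm.trace_mul_self_eq_zero_iff {S : Matrix ι ι ℝ} (hS : S.IsSymm) :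
    (S * S).trace = 0 ↔ S = 0 := by
  simpa only [(isHermitian_iff_isSymm.mpr hS).eq] using
    trace_conjTranspose_mul_self_eq_zero_iff (A := S)

theorem IsHermitian.eq_zero_of_exp_eq_one {𝕜 : Type*} [RCLike 𝕜] {A : Matrix ι ι 𝕜}
    (hA : A.IsHermitian) (h : NormedSpace.exp A = 1) : A = 0 := by
  set U : Matrix ι ι 𝕜 := (hA.eigenvectorUnitary : Matrix ι ι 𝕜)
  have hUU : star U * U = 1 := mem_unitaryGroup_iff'.mp hA.eigenvectorUnitary.2
  have hU : IsUnit U := (Unitary.toUnits hA.eigenvectorUnitary).isUnit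
  have hD : U⁻¹ * A * U = diagonal (RCLike.ofReal ∘ hA.eigenvalues) := by
    rw [inv_eq_left_inv hUU]
    simpa using hA.conjStarAlgAut_star_eigenvectorUnitary
  have hexpD : diagonal (NormedSpace.exp (RCLike.ofReal ∘ hA.eigenvalues : ι → 𝕜)) = 1 := by
    rw [← exp_diagonal, ← hD, exp_conj' U A hU, h, Matrix.mul_one, inv_eq_left_inv hUU, hUU]
  rw [← hA.eigenvalues_eq_zero_iff]
  funext i
  have hexp_i := congrFun₂ hexpD i i
  rw [diagonal_apply_eq, Pi.coe_exp, Function.comp_apply, one_apply_eq,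
    ← RCLike.algebraMap_eq_ofReal, ← NormedSpace.algebraMap_exp_comm, ← Real.exp_eq_exp_ℝ,
    RCLike.algebraMap_eq_ofReal, ← RCLike.ofReal_one, RCLike.ofReal_inj,
    Real.exp_eq_one_iff] at hexp_i
  exact hexp_i

end Matrix

def IsSimilarToSymm {ι : Type*} [Fintype ι] [DecidableEq ι] (k : Matrix ι ι ℝ) : Prop :=
  ∃ P S : Matrix ι ι ℝ, IsUnit P.det ∧ S.IsSymm ∧ k = P⁻¹ * S * P

namespace IsSimilarToSymm

variable {ι : Type*} [Fintype ι] [DecidableEq ι] {k : Matrix ι ι ℝ}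

theorem sub_smul_one (hk : IsSimilarToSymm k) (c : ℝ) : IsSimilarToSymm (k - c • 1) := by
  obtain ⟨P, S, hP, hS, rfl⟩ := hk
  refine ⟨P, S - c • 1, hP, hS.sub (isSymm_one.smul c), ?_⟩
  rw [Matrix.mul_sub, Matrix.sub_mul, Matrix.mul_smul, Matrix.smul_mul, Matrix.mul_one,
    nonsing_inv_mul P hP]

theorem trace_mul_self_nonneg (hk : IsSimilarToSymm k) : 0 ≤ (k * k).trace := by
  obtain ⟨P, S, hP, hS, rfl⟩ := hk
  rw [conj_mul_conj hP, trace_conj' ((isUnit_iff_isUnit_det P).mpr hP)]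
  exact hS.trace_mul_self_nonneg

theorem trace_mul_self_eq_zero_iff (hk : IsSimilarToSymm k) : (k * k).trace = 0 ↔ k = 0 := by
  obtain ⟨P, S, hP, hS, rfl⟩ := hk
  rw [conj_mul_conj hP, trace_conj' ((isUnit_iff_isUnit_det P).mpr hP),
    hS.trace_mul_self_eq_zero_iff]
  constructor
  · rintro rfl
    simp
  · intro h
    rw [← conj_inv_conj hP S, h]
    simp

theorem eq_zero_of_exp_eq_one (hk : IsSimilarToSymm k) (h : NormedSpace.exp k = 1) : k = 0 := by
  obtain ⟨P, S, hP, hS, rfl⟩ := hk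
  have hexpS : NormedSpace.exp S = 1 := by
    rw [← conj_inv_conj hP S, exp_conj _ _ ((isUnit_iff_isUnit_det P).mpr hP), h, Matrix.mul_one,
      mul_nonsing_inv P hP]
  rw [(isHermitian_iff_isSymm.mpr hS).eq_zero_of_exp_eq_one hexpS]
  simp

end IsSimilarToSymm

theorem IsRealLog.isSimilarToSymm {n : ℕ} {k m : Matrix (Fin n) (Fin n) ℝ} (h : IsRealLog k m) :
    IsSimilarToSymm k :=
  h.2

theorem IsRealLog.sub_smul_one_eq_zero_and_det_eq_iff {n : ℕ} [NeZero n]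
    {g₀ g₁ k : Matrix (Fin n) (Fin n) ℝ} (hg₀ : IsUnit g₀.det) (hlog : IsRealLog k (g₀⁻¹ * g₁)) :
    k - (k.trace / n) • 1 = 0 ∧ g₀.det = g₁.det ↔ g₀ = g₁ := by
  constructor
  · rintro ⟨hk, hdet⟩
    set c := k.trace / n
    have hg₁ : g₁ = Real.exp c • g₀ := by
      rw [← mul_nonsing_inv_cancel_left g₀ g₁ hg₀, ← hlog.1, sub_eq_zero.mp hk, exp_smul_one,
        Matrix.mul_smul, Matrix.mul_one]
    have hexp_one : Real.exp c = 1 :=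
      eq_one_of_det_smul_eq (exp_pos _).le hg₀.ne_zero (hg₁ ▸ hdet.symm)
    rw [hg₁, hexp_one, one_smul]
  · rintro rfl
    have hk : k = 0 :=
      hlog.isSimilarToSymm.eq_zero_of_exp_eq_one (by rw [hlog.1, nonsing_inv_mul _ hg₀])
    simp [hk]

/-- Pointwise squared Ebin distance `d² = (16/n)(a² − 2ab cos θ + b²)` is nonnegative
and vanishes iff `g₀ = g₁`. -/
theorem ebin_dist_posdef (n : ℕ) (hn : 0 < n)
    (g₀ g₁ k : Matrix (Fin n) (Fin n) ℝ)
    (hg₀ : g₀.PosDef) (hg₁ : g₁.PosDef) (hlog : IsRealLog k (g₀⁻¹ * g₁))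
    (k₀ : Matrix (Fin n) (Fin n) ℝ) (hk₀ : k₀ = k - (k.trace / n) • 1)
    (a b κ θ d2 : ℝ)
    (ha : a = g₀.det ^ ((1 : ℝ) / 4)) (hb : b = g₁.det ^ ((1 : ℝ) / 4))
    (hκ : κ = Real.sqrt (n * (k₀ * k₀).trace) / 4)
    (hθ : θ = min Real.pi κ)
    (hd : d2 = (16 / n) * (a ^ 2 - 2 * a * b * Real.cos θ + b ^ 2)) :
    0 ≤ d2 ∧ (d2 = 0 ↔ g₀ = g₁) := by
  have : NeZero n := ⟨hn.ne'⟩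
  have hk₀_sim : IsSimilarToSymm k₀ := hk₀ ▸ hlog.isSimilarToSymm.sub_smul_one _
  have hκ_nonneg : 0 ≤ κ := hκ ▸ by positivity
  have hθ_mem : θ ∈ Icc 0 π := hθ ▸ ⟨le_min pi_pos.le hκ_nonneg, min_le_left _ _⟩
  have hθ_zero : θ = 0 ↔ k₀ = 0 := by
    rw [hθ, min_eq_zero_iff_of_pos pi_pos, hκ, div_eq_zero_iff, or_iff_left four_ne_zero,
      Real.sqrt_eq_zero (mul_nonneg n.cast_nonneg hk₀_sim.trace_mul_self_nonneg), mul_eq_zero,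
      or_iff_right (Nat.cast_ne_zero.mpr hn.ne'), hk₀_sim.trace_mul_self_eq_zero_iff]
  have hab : a = b ↔ g₀.det = g₁.det := by
    rw [ha, hb, rpow_left_inj hg₀.det_pos.le hg₁.det_pos.le (by norm_num)]
  refine ⟨hd ▸ mul_nonneg (by positivity) (sq_sub_two_mul_mul_cos_add_sq_nonneg a b θ), ?_⟩
  rw [hd, mul_eq_zero, or_iff_right (by positivity),
    sq_sub_two_mul_mul_cos_add_sq_eq_zero_iff (ha ▸ rpow_pos_of_pos hg₀.det_pos _)
      (hb ▸ rpow_pos_of_pos hg₁.det_pos _) hθ_mem, hab, hθ_zero, hk₀, and_comm]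
  exact hlog.sub_smul_one_eq_zero_and_det_eq_iff (isUnit_iff_ne_zero.mpr hg₀.det_pos.ne')
end

section
/- The pointwise Ebin distance is invariant under simultaneous congruence up to the volume factor: for symmetric positive-definite g₀, g₁ and invertible B, d(Bᵀg₀B, Bᵀg₁B)² = |det B| · d(g₀, g₁)². -/
open Matrix

/-- The traceless part of `k`. -/
noncomputable def tracelessPart {n : ℕ} (k : Matrix (Fin n) (Fin n) ℝ) :
    Matrix (Fin n) (Fin n) ℝ :=
  k - (k.trace / n) • 1

/-- `κ = √(n Tr(k₀²))/4`. -/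
noncomputable def kappa {n : ℕ} (k : Matrix (Fin n) (Fin n) ℝ) : ℝ :=
  Real.sqrt (n * (tracelessPart k * tracelessPart k).trace) / 4

/-- Pointwise squared Ebin distance, where `k` is the real logarithm of `g₀⁻¹g₁`. -/
noncomputable def ebinD2 {n : ℕ} (g₀ g₁ k : Matrix (Fin n) (Fin n) ℝ) : ℝ :=
  (16 / n) * ((g₀.det ^ ((1 : ℝ) / 4)) ^ 2 -
    2 * (g₀.det ^ ((1 : ℝ) / 4)) * (g₁.det ^ ((1 : ℝ) / 4)) *
      Real.cos (min Real.pi (kappa k)) + (g₁.det ^ ((1 : ℝ) / 4)) ^ 2)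

/-!
Congruence by `B` multiplies both determinants by `(det B)²`, so the fourth roots `a`, `b` both
scale by `√|det B|` and `d²` by `|det B|`. The quotient `g₀⁻¹ g₁` is merely conjugated by `B`, so
`B⁻¹ k B` is a real logarithm of the new quotient; real logarithms in the sense of `IsRealLog` are
unique (they diagonalize over `ℝ`, and `exp` is injective on `ℝ`), hence `k' = B⁻¹ k B`, and `κ`
only involves traces, which are conjugation invariant.
-/

namespace Matrix

variable {ι R : Type*} [Fintype ι] [DecidableEq ι]

theorem conj_eq_conj_iff [CommRing R] {P Q A C : Matrix ι ι R} (hP : IsUnit P.det)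
    (hQ : IsUnit Q.det) :
    P⁻¹ * A * P = Q⁻¹ * C * Q ↔ Q * P⁻¹ * A = C * (Q * P⁻¹) := by
  constructor
  · intro h
    calc Q * P⁻¹ * A = Q * (P⁻¹ * A * P) * P⁻¹ := by
          simp only [Matrix.mul_assoc, mul_nonsing_inv _ hP, Matrix.mul_one]
      _ = C * (Q * P⁻¹) := by
          rw [h]; simp only [← Matrix.mul_assoc, mul_nonsing_inv _ hQ, Matrix.one_mul]
  · intro h
    calc P⁻¹ * A * P = Q⁻¹ * (Q * P⁻¹ * A) * P := by
          simp only [← Matrix.mul_assoc, nonsing_inv_mul _ hQ, Matrix.one_mul]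
      _ = Q⁻¹ * C * Q := by
          rw [h]; simp only [Matrix.mul_assoc, nonsing_inv_mul _ hP, Matrix.mul_one]

theorem mul_diagonal_eq_diagonal_mul_of_injective [CommRing R] [NoZeroDivisors R]
    {f : R → R} (hf : Function.Injective f) {X : Matrix ι ι R} {d e : ι → R}
    (h : X * diagonal (f ∘ d) = diagonal (f ∘ e) * X) :
    X * diagonal d = diagonal e * X := by
  ext i j
  have hij := congrFun₂ h i j
  simp only [mul_diagonal, diagonal_mul, Function.comp_apply] at hij ⊢
  rcases eq_or_ne (X i j) 0 with h0 | h0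
  · simp [h0]
  · rw [hf (mul_left_cancel₀ h0 (hij.trans (mul_comm _ _))), mul_comm]

theorem IsSymm.exists_conj_diagonal {S : Matrix ι ι ℝ} (hS : S.IsSymm) :
    ∃ (U : Matrix ι ι ℝ) (d : ι → ℝ), IsUnit U.det ∧ S = U⁻¹ * diagonal d * U := by
  have hH : S.IsHermitian := isHermitian_iff_isSymm.2 hS
  set U : Matrix ι ι ℝ := (hH.eigenvectorUnitary : Matrix ι ι ℝ)
  refine ⟨star U, hH.eigenvalues, isUnit_det_of_left_inverse (Unitary.coe_mul_star_self _),
    ?_⟩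
  rw [inv_eq_left_inv (Unitary.coe_mul_star_self _)]
  exact hH.spectral_theorem

theorem exp_conj_diagonal {P : Matrix ι ι ℝ} (hP : IsUnit P.det) (d : ι → ℝ) :
    NormedSpace.exp (P⁻¹ * diagonal d * P) = P⁻¹ * diagonal (Real.exp ∘ d) * P := by
  rw [exp_conj' P _ ((isUnit_iff_isUnit_det P).2 hP), exp_diagonal, Pi.exp_def,
    ← Real.exp_eq_exp_ℝ]
  rfl

theorem transpose_mul_mul_inv_mul_transpose_mul_mul [CommRing R] {B : Matrix ι ι R}
    (hB : IsUnit B.det) (g₀ g₁ : Matrix ι ι R) :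
    (Bᵀ * g₀ * B)⁻¹ * (Bᵀ * g₁ * B) = B⁻¹ * (g₀⁻¹ * g₁) * B := by
  have hBt : IsUnit Bᵀ.det := by rwa [det_transpose]
  simp only [Matrix.mul_inv_rev, Matrix.mul_assoc, nonsing_inv_mul_cancel_left _ _ hBt]

theorem det_transpose_mul_mul [CommRing R] (B g : Matrix ι ι R) :
    (Bᵀ * g * B).det = B.det ^ 2 * g.det := by
  rw [det_mul, det_mul, det_transpose]
  ring

end Matrix

theorem Real.sq_mul_rpow_one_div_four (b : ℝ) {x : ℝ} (hx : 0 ≤ x) :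
    (b ^ 2 * x) ^ ((1 : ℝ) / 4) = √|b| * x ^ ((1 : ℝ) / 4) := by
  rw [Real.mul_rpow (sq_nonneg b) hx, ← sq_abs, ← Real.rpow_natCast_mul (abs_nonneg b),
    Real.sqrt_eq_rpow]
  norm_num

section

variable {n : ℕ}

theorem IsRealLog.exists_conj_diagonal {k m : Matrix (Fin n) (Fin n) ℝ} (h : IsRealLog k m) :
    ∃ (Q : Matrix (Fin n) (Fin n) ℝ) (d : Fin n → ℝ),
      IsUnit Q.det ∧ k = Q⁻¹ * diagonal d * Q := by
  obtain ⟨-, P, S, hP, hS, rfl⟩ := h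
  obtain ⟨U, d, hU, rfl⟩ := hS.exists_conj_diagonal
  refine ⟨U * P, d, by rw [det_mul]; exact hU.mul hP, ?_⟩
  simp only [Matrix.mul_inv_rev, Matrix.mul_assoc]

theorem IsRealLog.unique {k l m : Matrix (Fin n) (Fin n) ℝ} (hk : IsRealLog k m)
    (hl : IsRealLog l m) : k = l := by
  obtain ⟨P, d, hP, rfl⟩ := hk.exists_conj_diagonal
  obtain ⟨Q, e, hQ, rfl⟩ := hl.exists_conj_diagonal
  have hexp : P⁻¹ * diagonal (Real.exp ∘ d) * P = Q⁻¹ * diagonal (Real.exp ∘ e) * Q := by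
    rw [← exp_conj_diagonal hP, ← exp_conj_diagonal hQ, hk.1, hl.1]
  rw [conj_eq_conj_iff hP hQ] at hexp ⊢
  exact mul_diagonal_eq_diagonal_mul_of_injective Real.exp_injective hexp

theorem IsRealLog.conj {k m B : Matrix (Fin n) (Fin n) ℝ} (h : IsRealLog k m)
    (hB : IsUnit B.det) : IsRealLog (B⁻¹ * k * B) (B⁻¹ * m * B) := by
  obtain ⟨hexp, P, S, hP, hS, rfl⟩ := h
  refine ⟨?_, P * B, S, by rw [det_mul]; exact hP.mul hB, hS, ?_⟩
  · rw [exp_conj' B _ ((isUnit_iff_isUnit_det B).2 hB), hexp]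
  · simp only [Matrix.mul_inv_rev, Matrix.mul_assoc]

theorem tracelessPart_conj {B : Matrix (Fin n) (Fin n) ℝ} (hB : IsUnit B.det)
    (k : Matrix (Fin n) (Fin n) ℝ) :
    tracelessPart (B⁻¹ * k * B) = B⁻¹ * tracelessPart k * B := by
  rw [tracelessPart, tracelessPart, trace_conj' ((isUnit_iff_isUnit_det B).2 hB), Matrix.mul_sub,
    Matrix.sub_mul, Matrix.mul_smul, Matrix.smul_mul, Matrix.mul_one, nonsing_inv_mul _ hB]

theorem kappa_conj {B : Matrix (Fin n) (Fin n) ℝ} (hB : IsUnit B.det)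
    (k : Matrix (Fin n) (Fin n) ℝ) : kappa (B⁻¹ * k * B) = kappa k := by
  have hsq : B⁻¹ * tracelessPart k * B * (B⁻¹ * tracelessPart k * B)
      = B⁻¹ * (tracelessPart k * tracelessPart k) * B := by
    simp only [Matrix.mul_assoc, mul_nonsing_inv_cancel_left _ _ hB]
  rw [kappa, kappa, tracelessPart_conj hB, hsq, trace_conj' ((isUnit_iff_isUnit_det B).2 hB)]

end

theorem ebinD2_congruence_general (n : ℕ)
    (g₀ g₁ B k k' : Matrix (Fin n) (Fin n) ℝ)
    (hg₀ : g₀.PosDef) (hg₁ : g₁.PosDef) (hB : IsUnit B.det)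
    (hlog : IsRealLog k (g₀⁻¹ * g₁))
    (hlog' : IsRealLog k' ((Bᵀ * g₀ * B)⁻¹ * (Bᵀ * g₁ * B))) :
    ebinD2 (Bᵀ * g₀ * B) (Bᵀ * g₁ * B) k' = |B.det| * ebinD2 g₀ g₁ k := by
  have hk' : k' = B⁻¹ * k * B := by
    rw [transpose_mul_mul_inv_mul_transpose_mul_mul hB] at hlog'
    exact hlog'.unique (hlog.conj hB)
  have hroot (g : Matrix (Fin n) (Fin n) ℝ) (hg : g.PosDef) :
      (Bᵀ * g * B).det ^ ((1 : ℝ) / 4) = √|B.det| * g.det ^ ((1 : ℝ) / 4) := by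
    rw [det_transpose_mul_mul, Real.sq_mul_rpow_one_div_four _ hg.det_pos.le]
  rw [← Real.sq_sqrt (abs_nonneg B.det)]
  simp only [ebinD2, hk', kappa_conj hB, hroot g₀ hg₀, hroot g₁ hg₁]
  ring

/-- Pointwise diffeomorphism-invariance of the Ebin distance up to the Jacobian factor:
`d(Bᵀg₀B, Bᵀg₁B)² = |det B| · d(g₀,g₁)²`. -/
theorem ebinD2_congruence (n : ℕ) (hn : 0 < n)
    (g₀ g₁ B k k' : Matrix (Fin n) (Fin n) ℝ)
    (hg₀ : g₀.PosDef) (hg₁ : g₁.PosDef) (hB : IsUnit B.det)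
    (hlog : IsRealLog k (g₀⁻¹ * g₁))
    (hlog' : IsRealLog k' ((Bᵀ * g₀ * B)⁻¹ * (Bᵀ * g₁ * B))) :
    ebinD2 (Bᵀ * g₀ * B) (Bᵀ * g₁ * B) k' = |B.det| * ebinD2 g₀ g₁ k :=
  ebinD2_congruence_general n g₀ g₁ B k k' hg₀ hg₁ hB hlog hlog'
end
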